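/- Let f be a submodular function on the ground set {1,…,n} with multilinear extension F. Let x, y ∈ [0,1]^n with x ≤ y componentwise, and let j ∈ {1,…,n}. Then F(y[j:=1]) − F(y[j:=0]) ≤ F(x[j:=1]) − F(x[j:=0]); that is, each partial derivative of the multilinear extension is non-increasing with respect to every coordinate. -/

import Mathlib

/-!
Splitting the sum over sets according to whether they contain `k` shows that the multilinear
extension `F` of `f` is affine in the coordinate `k`, with slope the multilinear extension of
`S ↦ f (S ∪ {k}) - f (S \ {k})`. Hence the multilinear extension of a monotone set function is
monotone on the cube. Submodularity says that `S ↦ f (S \ {j}) - f (S ∪ {j})` is monotone, and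
its multilinear extension is `F(·[j:=0]) - F(·[j:=1])`.
-/

open Finset

/-- The multilinear extension of a set function `f` on the ground set `Fin n`. -/
noncomputable def multilinearExt {n : ℕ} (f : Finset (Fin n) → ℝ)
    (x : Fin n → ℝ) : ℝ :=
  ∑ S : Finset (Fin n), f S * ((∏ i ∈ S, x i) * ∏ i ∈ Sᶜ, (1 - x i))

section WeightOn

variable {α : Type*} [DecidableEq α]

def weightOn (T : Finset α) (z : α → ℝ) (S : Finset α) : ℝ :=
  (∏ i ∈ S, z i) * ∏ i ∈ T \ S, (1 - z i)

lemma weightOn_nonneg (T : Finset α) {z : α → ℝ} (hz : ∀ i, z i ∈ Set.Icc (0 : ℝ) 1)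
    (S : Finset α) : 0 ≤ weightOn T z S :=
  mul_nonneg (prod_nonneg fun i _ => (hz i).1)
    (prod_nonneg fun i _ => sub_nonneg.mpr (hz i).2)

lemma weightOn_update_of_notMem {T S : Finset α} {k : α} (hkT : k ∉ T) (hkS : k ∉ S)
    (z : α → ℝ) (t : ℝ) : weightOn T (Function.update z k t) S = weightOn T z S := by
  unfold weightOn
  congr 1
  · exact prod_congr rfl fun i hi => Function.update_of_ne (ne_of_mem_of_not_mem hi hkS) _ _
  · exact prod_congr rfl fun i hi =>
      by rw [Function.update_of_ne (ne_of_mem_of_not_mem (mem_sdiff.mp hi).1 hkT)]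

lemma weightOn_insert {T S : Finset α} {k : α} (hkT : k ∉ T) (hST : S ⊆ T) (z : α → ℝ) :
    weightOn (insert k T) z S = (1 - z k) * weightOn T z S := by
  have hkS : k ∉ S := fun h => hkT (hST h)
  rw [weightOn, weightOn, insert_sdiff_of_notMem _ hkS, prod_insert (by simp [hkT])]
  ring

lemma weightOn_insert_insert {T S : Finset α} {k : α} (hkT : k ∉ T) (hST : S ⊆ T)
    (z : α → ℝ) : weightOn (insert k T) z (insert k S) = z k * weightOn T z S := by
  have hkS : k ∉ S := fun h => hkT (hST h)
  rw [weightOn, weightOn, insert_sdiff_insert, sdiff_insert_of_notMem hkT,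
    prod_insert hkS]
  ring

end WeightOn

section MultilinearExt

variable {n : ℕ}

lemma multilinearExt_eq_sum_weightOn (f : Finset (Fin n) → ℝ) (z : Fin n → ℝ) :
    multilinearExt f z = ∑ S : Finset (Fin n), f S * weightOn univ z S := by
  simp only [multilinearExt, weightOn, compl_eq_univ_sdiff]

lemma multilinearExt_sub (f g : Finset (Fin n) → ℝ) (z : Fin n → ℝ) :
    multilinearExt (f - g) z = multilinearExt f z - multilinearExt g z := by
  simp only [multilinearExt, Pi.sub_apply, sub_mul, sum_sub_distrib]

lemma multilinearExt_nonneg {f : Finset (Fin n) → ℝ} (hf : 0 ≤ f) {z : Fin n → ℝ}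
    (hz : ∀ i, z i ∈ Set.Icc (0 : ℝ) 1) : 0 ≤ multilinearExt f z := by
  rw [multilinearExt_eq_sum_weightOn]
  exact sum_nonneg fun S _ => mul_nonneg (hf S) (weightOn_nonneg _ hz S)

lemma multilinearExt_eq_sum_powerset_erase (f : Finset (Fin n) → ℝ) (z : Fin n → ℝ)
    (k : Fin n) :
    multilinearExt f z = ∑ S ∈ (univ.erase k).powerset,
      ((1 - z k) * f S + z k * f (insert k S)) * weightOn (univ.erase k) z S := by
  have hk : k ∉ univ.erase k := notMem_erase k univ
  rw [multilinearExt_eq_sum_weightOn, ← powerset_univ]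
  conv_lhs => rw [← insert_erase (mem_univ k)]
  rw [sum_powerset_insert hk, ← sum_add_distrib]
  refine sum_congr rfl fun S hS => ?_
  rw [weightOn_insert hk (mem_powerset.mp hS), weightOn_insert_insert hk (mem_powerset.mp hS)]
  ring

lemma multilinearExt_update (f : Finset (Fin n) → ℝ) (z : Fin n → ℝ) (k : Fin n) (t : ℝ) :
    multilinearExt f (Function.update z k t) = ∑ S ∈ (univ.erase k).powerset,
      ((1 - t) * f S + t * f (insert k S)) * weightOn (univ.erase k) z S := by
  rw [multilinearExt_eq_sum_powerset_erase, Function.update_self]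
  refine sum_congr rfl fun S hS => ?_
  have hkS : k ∉ S := fun h => notMem_erase k univ (mem_powerset.mp hS h)
  rw [weightOn_update_of_notMem (notMem_erase k univ) hkS]

lemma multilinearExt_update_eq_affine (f : Finset (Fin n) → ℝ) (z : Fin n → ℝ) (k : Fin n)
    (t : ℝ) :
    multilinearExt f (Function.update z k t) =
      (1 - t) * multilinearExt f (Function.update z k 0) +
        t * multilinearExt f (Function.update z k 1) := by
  simp only [multilinearExt_update, mul_sum, ← sum_add_distrib]
  exact sum_congr rfl fun S _ => by ring

lemma multilinearExt_update_one (f : Finset (Fin n) → ℝ) (z : Fin n → ℝ) (k : Fin n) :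
    multilinearExt f (Function.update z k 1) = multilinearExt (fun S => f (insert k S)) z := by
  rw [multilinearExt_update, multilinearExt_eq_sum_powerset_erase _ _ k]
  exact sum_congr rfl fun S _ => by rw [insert_idem]; ring

lemma multilinearExt_update_zero (f : Finset (Fin n) → ℝ) (z : Fin n → ℝ) (k : Fin n) :
    multilinearExt f (Function.update z k 0) = multilinearExt (fun S => f (S.erase k)) z := by
  rw [multilinearExt_update, multilinearExt_eq_sum_powerset_erase _ _ k]
  refine sum_congr rfl fun S hS => ?_
  have hkS : k ∉ S := fun h => notMem_erase k univ (mem_powerset.mp hS h)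
  rw [erase_insert hkS, erase_eq_of_notMem hkS]
  ring

lemma multilinearExt_le_update {f : Finset (Fin n) → ℝ} (hf : Monotone f) {z : Fin n → ℝ}
    (hz : ∀ i, z i ∈ Set.Icc (0 : ℝ) 1) {k : Fin n} {t : ℝ} (ht : z k ≤ t) :
    multilinearExt f z ≤ multilinearExt f (Function.update z k t) := by
  have hslope : 0 ≤ multilinearExt f (Function.update z k 1) -
      multilinearExt f (Function.update z k 0) := by
    rw [multilinearExt_update_one, multilinearExt_update_zero, ← multilinearExt_sub]
    exact multilinearExt_nonneg
      (fun S => sub_nonneg.mpr (hf ((erase_subset k S).trans (subset_insert k S)))) hz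
  have hz' := multilinearExt_update_eq_affine f z k (z k)
  rw [Function.update_eq_self] at hz'
  rw [hz', multilinearExt_update_eq_affine f z k t]
  nlinarith

theorem multilinearExt_mono {f : Finset (Fin n) → ℝ} (hf : Monotone f) {x y : Fin n → ℝ}
    (hx : ∀ i, x i ∈ Set.Icc (0 : ℝ) 1) (hy : ∀ i, y i ∈ Set.Icc (0 : ℝ) 1)
    (hxy : ∀ i, x i ≤ y i) : multilinearExt f x ≤ multilinearExt f y := by
  suffices h : ∀ A : Finset (Fin n), multilinearExt f x ≤ multilinearExt f (A.piecewise y x) by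
    simpa using h univ
  intro A
  induction A using Finset.induction_on with
  | empty => simp
  | @insert a A ha ih =>
    rw [piecewise_insert]
    refine ih.trans (multilinearExt_le_update hf (fun i => ?_) ?_)
    · by_cases hi : i ∈ A <;> simp [hi, hx i, hy i]
    · simp [ha, hxy a]

end MultilinearExt

lemma monotone_erase_sub_insert_of_submodular {α : Type*} [DecidableEq α]
    {f : Finset α → ℝ} (hsub : ∀ A B : Finset α, f A + f B ≥ f (A ∪ B) + f (A ∩ B)) (j : α) :
    Monotone fun S => f (S.erase j) - f (insert j S) := by
  intro S S' hSS'
  have hunion : insert j S ∪ S'.erase j = insert j S' := by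
    ext i
    simp only [mem_union, mem_insert, mem_erase]
    have := @hSS' i
    tauto
  have hinter : insert j S ∩ S'.erase j = S.erase j := by
    ext i
    simp only [mem_inter, mem_insert, mem_erase]
    have := @hSS' i
    tauto
  have h := hsub (insert j S) (S'.erase j)
  rw [hunion, hinter] at h
  simp only
  linarith

/-- Each partial derivative `F(·[j:=1]) − F(·[j:=0])` of the multilinear extension
of a submodular function is non-increasing with respect to every coordinate:
if `x ≤ y` componentwise (both in `[0,1]ⁿ`), then
`F(y[j:=1]) − F(y[j:=0]) ≤ F(x[j:=1]) − F(x[j:=0])`. -/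
theorem stmt_9 {n : ℕ} (f : Finset (Fin n) → ℝ)
    (hsub : ∀ A B : Finset (Fin n), f A + f B ≥ f (A ∪ B) + f (A ∩ B))
    (x y : Fin n → ℝ)
    (hx : ∀ i, x i ∈ Set.Icc (0 : ℝ) 1) (hy : ∀ i, y i ∈ Set.Icc (0 : ℝ) 1)
    (hxy : ∀ i, x i ≤ y i) (j : Fin n) :
    multilinearExt f (Function.update y j 1) -
        multilinearExt f (Function.update y j 0) ≤
      multilinearExt f (Function.update x j 1) -
        multilinearExt f (Function.update x j 0) := by
  have h := multilinearExt_mono (monotone_erase_sub_insert_of_submodular hsub j) hx hy hxy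
  have hsplit := multilinearExt_sub (fun S => f (S.erase j)) (fun S => f (insert j S))
  rw [← Pi.sub_def, hsplit, hsplit] at h
  simp only [multilinearExt_update_one, multilinearExt_update_zero]
  linarith
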